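/- arXiv:1911.07993 — 3 statements merged into one kernel-verified Lean document; each statement's English description precedes it below -/
import Mathlib

section
/- Let $(X,\{f_n\}_{n=1}^{\infty})$ be a nonautonomous dynamical system on a compact metric space. For every $k \in \mathbb{N}_+$, the product system $(X^k, \{f_n^{(k)}\}_{n=1}^{\infty})$, where $f_n^{(k)} = f_n \times \cdots \times f_n$ ($k$ times) and $X^k$ carries the max metric, satisfies $h_{top}(X^k, \{f_n^{(k)}\}) = k \cdot h_{top}(X, \{f_n\})$. -/
open Filter MeasureTheory

noncomputable section

def compSeq {X : Type*} (f : ℕ → X → X) : ℕ → X → X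
  | 0 => id
  | n + 1 => f n ∘ compSeq f n

/-- `E` is an `(n, ε)`-separated set for the nonautonomous system `(X, f)`
with respect to the distance function `d`. -/
def IsSeparatedSet {X : Type*} (d : X → X → ℝ) (f : ℕ → X → X) (n : ℕ) (ε : ℝ)
    (E : Set X) : Prop :=
  ∀ x ∈ E, ∀ y ∈ E, x ≠ y → ∃ j < n, ε < d (compSeq f j x) (compSeq f j y)

/-- `F` is an `(n, ε)`-spanning set for the nonautonomous system `(X, f)`. -/
def IsSpanningSet {X : Type*} (d : X → X → ℝ) (f : ℕ → X → X) (n : ℕ) (ε : ℝ)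
    (F : Set X) : Prop :=
  ∀ x : X, ∃ y ∈ F, ∀ j < n, d (compSeq f j x) (compSeq f j y) < ε

/-- maximal cardinality of an `(n, ε)`-separated set. -/
def sepNum {X : Type*} (d : X → X → ℝ) (f : ℕ → X → X) (n : ℕ) (ε : ℝ) : ℕ :=
  sSup {c | ∃ E : Finset X, IsSeparatedSet d f n ε ↑E ∧ E.card = c}

/-- minimal cardinality of an `(n, ε)`-spanning set. -/
def spanNum {X : Type*} (d : X → X → ℝ) (f : ℕ → X → X) (n : ℕ) (ε : ℝ) : ℕ :=
  sInf {c | ∃ F : Finset X, IsSpanningSet d f n ε ↑F ∧ F.card = c}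

/-- Topological entropy of a nonautonomous dynamical system, via separated sets. -/
def nadsEntropy {X : Type*} (d : X → X → ℝ) (f : ℕ → X → X) : EReal :=
  ⨆ (ε : ℝ) (_ : 0 < ε),
    atTop.limsup fun n : ℕ => ((Real.log (sepNum d f n ε) / n : ℝ) : EReal)

end

/-!
Write `s(ε)` for the maximal cardinality of an `(n, ε)`-separated set. Products of separated sets
are separated in the max metric, so `s_X(ε)^k ≤ s_{X^k}(ε)`. Conversely, a maximal
`(n, ε/4)`-separated set of `X` is `(n, ε/2)`-spanning, its `k`-th power is `(n, ε/2)`-spanning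
in `X^k`, and an `(n, ε)`-separated set injects into any `(n, ε/2)`-spanning set; hence
`s_{X^k}(ε) ≤ s_X(ε/4)^k`. Taking `log`, dividing by `n` and passing to `limsup` and `sup` over
`ε` gives the equality of entropies.
-/

open Finset

section Separation

variable {X : Type*}

theorem continuous_compSeq [TopologicalSpace X] {f : ℕ → X → X}
    (hf : ∀ n, Continuous (f n)) : ∀ j, Continuous (compSeq f j)
  | 0 => continuous_id
  | j + 1 => (hf j).comp (continuous_compSeq hf j)

variable [PseudoMetricSpace X] {f : ℕ → X → X} {n : ℕ} {ε δ : ℝ}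

theorem isSeparatedSet_empty : IsSeparatedSet dist f n ε ∅ := by
  simp [IsSeparatedSet]

theorem isSeparatedSet_insert {E : Set X} {x : X} (hE : IsSeparatedSet dist f n ε E)
    (hx : ∀ y ∈ E, ∃ j < n, ε < dist (compSeq f j x) (compSeq f j y)) :
    IsSeparatedSet dist f n ε (insert x E) := by
  rintro a (rfl | ha) b (rfl | hb) hab
  · exact absurd rfl hab
  · exact hx b hb
  · obtain ⟨j, hj, hd⟩ := hx a ha
    exact ⟨j, hj, dist_comm (compSeq f j a) _ ▸ hd⟩
  · exact hE a ha b hb hab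

theorem IsSeparatedSet.card_le_of_isSpanningSet {E F : Finset X}
    (hE : IsSeparatedSet dist f n ε E) (hF : IsSpanningSet dist f n δ F) (hδ : 2 * δ ≤ ε) :
    #E ≤ #F := by
  choose φ hφF hφ using hF
  refine card_le_card_of_injOn φ (fun x _ => hφF x) fun x hx y hy hxy => ?_
  by_contra hne
  obtain ⟨j, hj, hd⟩ := hE x hx y hy hne
  have hx' := hφ x j hj
  have hy' := hφ y j hj
  rw [hxy] at hx'
  linarith [dist_triangle_right (compSeq f j x) (compSeq f j y) (compSeq f j (φ y))]

variable [CompactSpace X]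

theorem exists_finset_isSpanningSet (hf : ∀ n, Continuous (f n)) (hε : 0 < ε) :
    ∃ F : Finset X, IsSpanningSet dist f n ε F := by
  let U : X → Set X := fun y => ⋂ j : Fin n, compSeq f j ⁻¹' Metric.ball (compSeq f j y) ε
  have hU : ∀ y, IsOpen (U y) := fun y => isOpen_iInter_of_finite fun j =>
    Metric.isOpen_ball.preimage (continuous_compSeq hf j)
  obtain ⟨F, hF⟩ := isCompact_univ.elim_finite_subcover U hU fun x _ =>
    Set.mem_iUnion.2 ⟨x, Set.mem_iInter.2 fun j => Metric.mem_ball_self hε⟩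
  refine ⟨F, fun x => ?_⟩
  obtain ⟨y, hy, hxy⟩ := Set.mem_iUnion₂.1 (hF (Set.mem_univ x))
  exact ⟨y, hy, fun j hj => Set.mem_iInter.1 hxy (⟨j, hj⟩ : Fin n)⟩

theorem bddAbove_card_isSeparatedSet (hf : ∀ n, Continuous (f n)) (hε : 0 < ε) :
    BddAbove {c | ∃ E : Finset X, IsSeparatedSet dist f n ε E ∧ #E = c} := by
  obtain ⟨F, hF⟩ := exists_finset_isSpanningSet (n := n) hf (half_pos hε)
  exact ⟨#F, by rintro _ ⟨E, hE, rfl⟩; exact hE.card_le_of_isSpanningSet hF (by linarith)⟩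

theorem IsSeparatedSet.card_le_sepNum (hf : ∀ n, Continuous (f n)) (hε : 0 < ε)
    {E : Finset X} (hE : IsSeparatedSet dist f n ε E) : #E ≤ sepNum dist f n ε :=
  le_csSup (bddAbove_card_isSeparatedSet hf hε) ⟨E, hE, rfl⟩

theorem exists_isSeparatedSet_card_eq_sepNum (hf : ∀ n, Continuous (f n)) (hε : 0 < ε) :
    ∃ E : Finset X, IsSeparatedSet dist f n ε E ∧ #E = sepNum dist f n ε :=
  Nat.sSup_mem (s := {c | ∃ E : Finset X, IsSeparatedSet dist f n ε E ∧ #E = c})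
    ⟨0, ∅, coe_empty (α := X) ▸ isSeparatedSet_empty, card_empty⟩
    (bddAbove_card_isSeparatedSet hf hε)

theorem IsSeparatedSet.isSpanningSet_of_card_eq_sepNum (hf : ∀ n, Continuous (f n))
    (hδ : 0 < δ) (hδε : δ < ε) {E : Finset X} (hE : IsSeparatedSet dist f n δ E)
    (hcard : #E = sepNum dist f n δ) : IsSpanningSet dist f n ε E := by
  classical
  intro x
  by_contra! hfar
  have hfar' : ∀ y ∈ (E : Set X), ∃ j < n, δ < dist (compSeq f j x) (compSeq f j y) :=
    fun y hy => (hfar y hy).imp fun j ⟨hj, hd⟩ => ⟨hj, hδε.trans_le hd⟩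
  have hx : x ∉ E := fun hx => by
    obtain ⟨j, -, hd⟩ := hfar' x hx
    simp [hδ.not_gt] at hd
  have hins : IsSeparatedSet dist f n δ ↑(insert x E) := by
    rw [coe_insert]; exact isSeparatedSet_insert hE hfar'
  have := hins.card_le_sepNum hf hδ
  rw [card_insert_of_notMem hx] at this
  omega

end Separation

section Product

variable {X ι : Type*} {f : ℕ → X → X}

theorem compSeq_pi_apply (f : ℕ → X → X) :
    ∀ (j : ℕ) (x : ι → X) (i : ι),
      compSeq (fun n (x : ι → X) i => f n (x i)) j x i = compSeq f j (x i)
  | 0, _, _ => rfl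
  | j + 1, x, i => congrArg (f j) (compSeq_pi_apply f j x i)

theorem continuous_pi_map_apply [TopologicalSpace X] {n : ℕ} (hf : Continuous (f n)) :
    Continuous fun (x : ι → X) i => f n (x i) := by
  fun_prop

theorem card_piFinset_const [Fintype ι] [DecidableEq ι] (s : Finset X) :
    #(Fintype.piFinset fun _ : ι => s) = #s ^ Fintype.card ι := by
  simp

variable [PseudoMetricSpace X] [Fintype ι] [DecidableEq ι] {n : ℕ} {ε : ℝ}

theorem IsSeparatedSet.piFinset {E : Finset X} (hE : IsSeparatedSet dist f n ε E) :
    IsSeparatedSet dist (fun n (x : ι → X) i => f n (x i)) n ε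
      (Fintype.piFinset fun _ : ι => E) := by
  intro x hx y hy hxy
  rw [mem_coe, Fintype.mem_piFinset] at hx hy
  obtain ⟨i, hi⟩ := Function.ne_iff.1 hxy
  obtain ⟨j, hj, hd⟩ := hE (x i) (hx i) (y i) (hy i) hi
  refine ⟨j, hj, hd.trans_le ?_⟩
  simpa only [compSeq_pi_apply] using dist_le_pi_dist
    (compSeq (fun n (x : ι → X) i => f n (x i)) j x)
    (compSeq (fun n (x : ι → X) i => f n (x i)) j y) i

theorem IsSpanningSet.piFinset (hε : 0 < ε) {F : Finset X} (hF : IsSpanningSet dist f n ε F) :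
    IsSpanningSet dist (fun n (x : ι → X) i => f n (x i)) n ε
      (Fintype.piFinset fun _ : ι => F) := by
  intro x
  choose y hyF hy using fun i => hF (x i)
  refine ⟨y, by simpa using hyF, fun j hj => (dist_pi_lt_iff hε).2 fun i => ?_⟩
  simpa only [compSeq_pi_apply] using hy i j hj

variable [CompactSpace X] (hf : ∀ n, Continuous (f n))
include hf

theorem sepNum_pow_card_le_sepNum_pi (hε : 0 < ε) :
    sepNum dist f n ε ^ Fintype.card ι ≤
      sepNum dist (fun n (x : ι → X) i => f n (x i)) n ε := by
  obtain ⟨E, hE, hcard⟩ := exists_isSeparatedSet_card_eq_sepNum hf hε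
  rw [← hcard, ← card_piFinset_const]
  exact hE.piFinset.card_le_sepNum (fun n => continuous_pi_map_apply (hf n)) hε

theorem sepNum_pi_le_sepNum_pow_card (hε : 0 < ε) :
    sepNum dist (fun n (x : ι → X) i => f n (x i)) n ε ≤
      sepNum dist f n (ε / 4) ^ Fintype.card ι := by
  obtain ⟨E, hE, hcard⟩ := exists_isSeparatedSet_card_eq_sepNum hf (n := n) (ε := ε / 4)
    (by positivity)
  have hspan : IsSpanningSet dist f n (ε / 2) E :=
    hE.isSpanningSet_of_card_eq_sepNum hf (by positivity) (by linarith) hcard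
  obtain ⟨D, hD, hDcard⟩ := exists_isSeparatedSet_card_eq_sepNum
    (fun n => continuous_pi_map_apply (ι := ι) (hf n)) (n := n) hε
  rw [← hcard, ← card_piFinset_const, ← hDcard]
  exact hD.card_le_of_isSpanningSet (hspan.piFinset (by positivity)) (by linarith)

end Product

section Entropy

open Real

theorem log_natCast_le_log_natCast {a b : ℕ} (h : a ≤ b) : log a ≤ log b := by
  rcases a.eq_zero_or_pos with rfl | ha
  · simpa using log_natCast_nonneg b
  · exact log_le_log (by exact_mod_cast ha) (by exact_mod_cast h)

theorem EReal.coe_mul_iSup_of_pos {ι : Sort*} {c : ℝ} (hc : 0 < c) (g : ι → EReal) :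
    (c : EReal) * ⨆ i, g i = ⨆ i, (c : EReal) * g i := by
  have hc' : (0 : EReal) < c := EReal.coe_pos.2 hc
  refine le_antisymm ?_ (iSup_le fun i => mul_le_mul_of_nonneg_left (le_iSup g i) hc'.le)
  rw [mul_comm, ← EReal.le_div_iff_mul_le hc' (EReal.coe_ne_top c)]
  refine iSup_le fun i => (EReal.le_div_iff_mul_le hc' (EReal.coe_ne_top c)).2 ?_
  rw [mul_comm]
  exact le_iSup (fun i => (c : EReal) * g i) i

theorem EReal.iSup_pos_limsup_const_mul {c : ℝ} (hc : 0 ≤ c) (u : ℝ → ℕ → ℝ) :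
    ⨆ (ε : ℝ) (_ : 0 < ε), atTop.limsup (fun n => ((c * u ε n : ℝ) : EReal)) =
      (c : EReal) * ⨆ (ε : ℝ) (_ : 0 < ε), atTop.limsup (fun n => (u ε n : EReal)) := by
  rcases hc.eq_or_lt with rfl | hc
  · simp only [zero_mul, EReal.coe_zero, limsup_const]
    exact le_antisymm (iSup₂_le fun _ _ => le_rfl) (le_iSup₂_of_le 1 one_pos le_rfl)
  simp only [EReal.coe_mul, EReal.limsup_const_mul_of_nonneg_of_ne_top (EReal.coe_nonneg.2 hc.le)
    (EReal.coe_ne_top c), EReal.coe_mul_iSup_of_pos hc]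

theorem nadsEntropy_eq_mul_of_sepNum_bounds {X Y : Type*}
    {dX : X → X → ℝ} {dY : Y → Y → ℝ} {f : ℕ → X → X} {g : ℕ → Y → Y}
    (k : ℕ)
    (hlow : ∀ ε > 0, ∀ n, sepNum dX f n ε ^ k ≤ sepNum dY g n ε)
    (hup : ∀ ε > 0, ∃ δ > 0, ∀ n, sepNum dY g n ε ≤ sepNum dX f n δ ^ k) :
    nadsEntropy dY g = ((k : ℝ) : EReal) * nadsEntropy dX f := by
  have hlog {a b : ℕ} (h : a ≤ b) (n : ℕ) : log a / n ≤ log b / n :=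
    div_le_div_of_nonneg_right (log_natCast_le_log_natCast h) n.cast_nonneg
  have hlog_pow (a n : ℕ) : log ↑(a ^ k) / n = k * (log a / n) := by
    rw [Nat.cast_pow, log_pow, mul_div_assoc]
  rw [nadsEntropy, nadsEntropy, ← EReal.iSup_pos_limsup_const_mul k.cast_nonneg]
  apply le_antisymm
  · refine iSup₂_le fun ε hε => ?_
    obtain ⟨δ, hδ, hδε⟩ := hup ε hε
    refine le_iSup₂_of_le δ hδ (limsup_le_limsup (Eventually.of_forall fun n => ?_))
    exact EReal.coe_le_coe_iff.2 (hlog_pow _ n ▸ hlog (hδε n) n)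
  · refine iSup₂_le fun ε hε => le_iSup₂_of_le ε hε ?_
    refine limsup_le_limsup (Eventually.of_forall fun n => ?_)
    exact EReal.coe_le_coe_iff.2 (hlog_pow _ n ▸ hlog (hlow ε hε n) n)

end Entropy

theorem product_entropy_general {X : Type*} [MetricSpace X] [CompactSpace X]
    (f : ℕ → X → X) (hf : ∀ n, Continuous (f n)) (k : ℕ) :
    nadsEntropy (fun x y : Fin k → X => dist x y) (fun n x i => f n (x i)) =
      ((k : ℝ) : EReal) * nadsEntropy (fun x y : X => dist x y) f := by
  refine nadsEntropy_eq_mul_of_sepNum_bounds k (fun ε hε n => ?_)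
    fun ε hε => ⟨ε / 4, by positivity, fun n => ?_⟩
  · simpa using sepNum_pow_card_le_sepNum_pi (ι := Fin k) (n := n) hf hε
  · simpa using sepNum_pi_le_sepNum_pow_card (ι := Fin k) (n := n) hf hε

theorem product_entropy {X : Type*} [MetricSpace X] [CompactSpace X]
    (f : ℕ → X → X) (hf : ∀ n, Continuous (f n)) (k : ℕ) (hk : 0 < k) :
    nadsEntropy (fun x y : Fin k → X => dist x y) (fun n x i => f n (x i)) =
      ((k : ℝ) : EReal) * nadsEntropy (fun x y : X => dist x y) f :=
  product_entropy_general f hf k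
end

section
/- Define $X = \{0\} \cup \{1\} \cup \{(a, 1/n) : a \in \{0,1\}^{\mathbb{N}}, n \ge 1\}$ with the topology making $(a,1/n) \to 0$ as $n \to \infty$ when $a_0 = 0$, and $(a,1/n) \to 1$ when $a_0 = 1$. Define continuous maps $f_n$ on $X$ by $f_n((a,1/i)) = (\sigma(a), 1/(i+1))$ if $i < n$ and $f_n(x) = x$ otherwise, where $\sigma$ is the left shift. Then $h_{top}(X, \{f_n\}) \ge \log 2$. -/
open Filter MeasureTheory

/-- The standard embedding of the Cantor space `{0,1}^ℕ` into `ℝ`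
(base-3 expansion with digits 0 and 2). -/
noncomputable def cantorEmb (a : ℕ → Bool) : ℝ :=
  ∑' i : ℕ, (if a i then 2 else 0) / 3 ^ (i + 1)

/-- The space `X = {0} ∪ {1} ∪ {a × (1/n) : a ∈ Σ₂, n ≥ 1}`: `Sum.inl false`
is the point `0`, `Sum.inl true` is the point `1`, and `Sum.inr (a, m)`
is the point `a × 1/(m+1)`. -/
def XSpace : Type := Bool ⊕ ((ℕ → Bool) × ℕ)

/-- The embedding of `XSpace` into `ℝ³` realizing the required topology:
points `a × 1/n` with `a₀ = 0` converge to `0` and those with `a₀ = 1`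
converge to `1` as `n → ∞`. -/
noncomputable def iotaX : XSpace → ℝ × ℝ × ℝ
  | Sum.inl b => ((if b then 1 else 0), 0, 0)
  | Sum.inr (a, m) => ((if a 0 then 1 else 0), 1 / (m + 1), cantorEmb a / (m + 1))

/-- The metric on `XSpace`, pulled back from `ℝ³`. -/
noncomputable def distX (p q : XSpace) : ℝ := dist (iotaX p) (iotaX q)

/-- `fX n` is the map `f_{n+1}` of the paper: it sends `a × 1/i` to
`σ(a) × 1/(i+1)` when `i < n + 1` (here `i = m + 1`) and fixes all other points. -/
def fX (n : ℕ) : XSpace → XSpace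
  | Sum.inr (a, m) => if m < n then Sum.inr (fun j => a (j + 1), m + 1) else Sum.inr (a, m)
  | x => x

/-- The space `Y = {0} ∪ {a × (1/n) : a ∈ Σ₂, n ≥ 1}`: `Sum.inl ()` is the
point `0` and `Sum.inr (a, m)` is the point `a × 1/(m+1)`. -/
def YSpace : Type := Unit ⊕ ((ℕ → Bool) × ℕ)

/-- The embedding of `YSpace` into `ℝ²` realizing the required topology:
all points `a × 1/n` converge to `0` as `n → ∞`. -/
noncomputable def iotaY : YSpace → ℝ × ℝ
  | Sum.inl _ => (0, 0)
  | Sum.inr (a, m) => (1 / (m + 1), cantorEmb a / (m + 1))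

/-- The metric on `YSpace`, pulled back from `ℝ²`. -/
noncomputable def distY (p q : YSpace) : ℝ := dist (iotaY p) (iotaY q)

/-- `gY n` is the map `g_{n+1}` of the paper, the same formula as `fX n`. -/
def gY (n : ℕ) : YSpace → YSpace
  | Sum.inr (a, m) => if m < n then Sum.inr (fun j => a (j + 1), m + 1) else Sum.inr (a, m)
  | y => y

/-! For `s ⊆ {0, …, k - 1}` consider the point `(𝟙_s, 1)`. After `i + 1` steps its orbit is at
`(σⁱ 𝟙_s, 1/(i + 1))` (the first map `f₁` moves nothing), and the embedding into `ℝ³` records the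
leading digit `(σⁱ 𝟙_s)₀ = 𝟙_s(i)` as its first coordinate. So two such points with `i ∈ s ∆ t` are
at distance `≥ 1` at time `i + 1`: these `2ᵏ` points are `(k + 1, 1/2)`-separated, and the entropy
is at least `log 2`. -/

open Topology

section SeparatedSets

variable {X : Type*}

/-- The orbits `(ι (f₁ʲ x))_{j < n}` of an `(n, ε)`-separated set are `ε`-separated points of the
compact set `Kⁿ`, so there are boundedly many of them. -/
lemma bddAbove_card_isSeparatedSet_s11 {M : Type*} [PseudoMetricSpace M] {ι : X → M} {K : Set M}
    (hK : IsCompact K) (hι : ∀ x, ι x ∈ K) (f : ℕ → X → X) (n : ℕ) {ε : ℝ} (hε : 0 < ε) :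
    BddAbove {c | ∃ E : Finset X,
      IsSeparatedSet (fun x y => dist (ι x) (ι y)) f n ε ↑E ∧ E.card = c} := by
  set orbit : X → Fin n → M := fun x j => ι (compSeq f j x)
  have hbdd : TotallyBounded (Set.range orbit) :=
    (isCompact_univ_pi fun _ => hK).totallyBounded.subset
      (Set.range_subset_iff.2 fun x => Set.mem_univ_pi.2 fun j => hι _)
  obtain ⟨t, ht, hcover⟩ := Metric.totallyBounded_iff.mp hbdd (ε / 2) (half_pos hε)
  choose center hcenter hdist using fun x => Set.mem_iUnion₂.1 (hcover (Set.mem_range_self x))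
  refine ⟨ht.toFinset.card, ?_⟩
  rintro _ ⟨E, hE, rfl⟩
  refine Finset.card_le_card_of_injOn center (fun x _ => ht.mem_toFinset.2 (hcenter x)) ?_
  intro x hx y hy hxy
  by_contra hne
  obtain ⟨j, hj, hsep⟩ := hE x hx y hy hne
  have horbit : dist (orbit x) (orbit y) < ε := calc
    dist (orbit x) (orbit y) ≤ dist (orbit x) (center x) + dist (orbit y) (center y) := by
      rw [hxy]; exact dist_triangle_right _ _ _
    _ < ε / 2 + ε / 2 := add_lt_add (hdist x) (hdist y)
    _ = ε := add_halves ε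
  exact hsep.not_ge ((dist_le_pi_dist (orbit x) (orbit y) ⟨j, hj⟩).trans horbit.le)

/-- `sepNum` is an `sSup` in `ℕ`, which is `0` for unbounded sets: the bound above is what makes
it dominate the separated sets. -/
lemma card_le_sepNum {M : Type*} [PseudoMetricSpace M] {ι : X → M} {K : Set M}
    (hK : IsCompact K) (hι : ∀ x, ι x ∈ K) {f : ℕ → X → X} {n : ℕ} {ε : ℝ} (hε : 0 < ε)
    {E : Finset X} (hE : IsSeparatedSet (fun x y => dist (ι x) (ι y)) f n ε ↑E) :
    E.card ≤ sepNum (fun x y => dist (ι x) (ι y)) f n ε :=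
  le_csSup (bddAbove_card_isSeparatedSet_s11 hK hι f n hε) ⟨E, hE, rfl⟩

lemma log_le_nadsEntropy {d : X → X → ℝ} {f : ℕ → X → X} {ε c : ℝ} (hε : 0 < ε) (hc : 0 < c)
    (h : ∀ k : ℕ, c ^ k ≤ sepNum d f (k + 1) ε) :
    (Real.log c : EReal) ≤ nadsEntropy d f := by
  set rate : ℕ → EReal := fun n => ((Real.log (sepNum d f n ε) / n : ℝ) : EReal)
  have hlower : ∀ k : ℕ, (((k : ℝ) / (k + 1) * Real.log c : ℝ) : EReal) ≤ rate (k + 1) := by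
    intro k
    simp only [rate, EReal.coe_le_coe_iff, Nat.cast_add_one, div_mul_eq_mul_div, ← Real.log_pow]
    gcongr
    exact h k
  have htendsto : Tendsto (fun k : ℕ => (((k : ℝ) / (k + 1) * Real.log c : ℝ) : EReal)) atTop
      (𝓝 (Real.log c)) :=
    EReal.tendsto_coe.2 <| by
      simpa using (tendsto_natCast_div_add_atTop (1 : ℝ)).mul_const (Real.log c)
  calc (Real.log c : EReal)
      = limsup (fun k : ℕ => (((k : ℝ) / (k + 1) * Real.log c : ℝ) : EReal)) atTop :=
        htendsto.limsup_eq.symm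
    _ ≤ limsup (fun k => rate (k + 1)) atTop := limsup_le_limsup (Eventually.of_forall hlower)
    _ = limsup rate atTop := limsup_nat_add rate 1
    _ ≤ nadsEntropy d f := le_iSup₂_of_le ε hε le_rfl

end SeparatedSets

lemma cantorEmb_eq_ofDigits (a : ℕ → Bool) :
    cantorEmb a = Real.ofDigits (fun i => if a i then (2 : Fin 3) else 0) := by
  unfold cantorEmb Real.ofDigits Real.ofDigitsTerm
  congr 1; funext i
  cases h : a i <;> simp [h, div_eq_mul_inv]

lemma cantorEmb_mem_Icc (a : ℕ → Bool) : cantorEmb a ∈ Set.Icc 0 1 := by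
  rw [cantorEmb_eq_ofDigits]
  exact ⟨Real.ofDigits_nonneg _, Real.ofDigits_le_one _⟩

lemma iotaX_mem_Icc (x : XSpace) : iotaX x ∈ Set.Icc 0 1 := by
  rcases x with b | ⟨a, m⟩
  · cases b <;> simp [iotaX, Prod.le_def]
  · have hm : (1 : ℝ) ≤ m + 1 := le_add_of_nonneg_left m.cast_nonneg
    obtain ⟨h0, h1⟩ := cantorEmb_mem_Icc a
    simp only [iotaX, Set.mem_Icc, Prod.le_def]
    refine ⟨⟨by split_ifs <;> norm_num, by positivity, by positivity⟩,
      by split_ifs <;> norm_num, ?_, ?_⟩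
    · exact div_le_one_of_le₀ hm (by positivity)
    · exact div_le_one_of_le₀ (h1.trans hm) (by positivity)

lemma compSeq_fX_inr_zero (a : ℕ → Bool) (k : ℕ) :
    compSeq fX (k + 1) (Sum.inr (a, 0)) = Sum.inr (fun l => a (l + k), k) := by
  induction k with
  | zero => rfl
  | succ k ih =>
    show fX (k + 1) (compSeq fX (k + 1) _) = _
    rw [ih]
    exact if_pos k.lt_add_one |>.trans <| by simp only [Nat.add_right_comm _ 1 k]; rfl

lemma one_le_distX_inr {a b : ℕ → Bool} (h : a 0 ≠ b 0) (m m' : ℕ) :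
    1 ≤ distX (Sum.inr (a, m)) (Sum.inr (b, m')) :=
  calc (1 : ℝ) = dist (if a 0 then (1 : ℝ) else 0) (if b 0 then 1 else 0) := by
        cases ha : a 0 <;> cases hb : b 0 <;> simp_all [Real.dist_eq]
    _ ≤ distX (Sum.inr (a, m)) (Sum.inr (b, m')) := le_max_left _ _

@[simps]
def indicatorPoint : Finset ℕ ↪ XSpace where
  toFun s := Sum.inr (fun i => decide (i ∈ s), 0)
  inj' s t h := by
    ext i
    simpa using congrFun (congrArg Prod.fst (Sum.inr_injective h)) i

lemma isSeparatedSet_indicatorPoint (k : ℕ) :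
    IsSeparatedSet distX fX (k + 1) (1 / 2)
      ↑((Finset.range k).powerset.map indicatorPoint) := by
  simp only [IsSeparatedSet, Finset.coe_map, Set.forall_mem_image, Finset.mem_coe,
    Finset.mem_powerset]
  intro s hs t ht hne
  obtain ⟨i, hi⟩ : ∃ i, ¬(i ∈ s ↔ i ∈ t) := by
    by_contra! h
    exact hne (congrArg indicatorPoint (Finset.ext h))
  have hik : i < k := by
    rw [← Finset.mem_range]
    by_cases his : i ∈ s
    exacts [hs his, ht (by tauto)]
  refine ⟨i + 1, by omega, ?_⟩
  rw [indicatorPoint_apply, indicatorPoint_apply, compSeq_fX_inr_zero, compSeq_fX_inr_zero]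
  exact one_half_lt_one.trans_le (one_le_distX_inr (by simpa using hi) i i)

lemma two_pow_le_sepNum_distX (k : ℕ) : 2 ^ k ≤ sepNum distX fX (k + 1) (1 / 2) := by
  have hcard : ((Finset.range k).powerset.map indicatorPoint).card = 2 ^ k := by
    rw [Finset.card_map, Finset.card_powerset, Finset.card_range]
  exact hcard ▸ card_le_sepNum isCompact_Icc iotaX_mem_Icc (by norm_num)
    (isSeparatedSet_indicatorPoint k)

theorem entropy_X_ge_log_two :
    ((Real.log 2 : ℝ) : EReal) ≤ nadsEntropy distX fX :=
  log_le_nadsEntropy (ε := 1 / 2) (by norm_num) two_pos fun k => by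
    exact_mod_cast two_pow_le_sepNum_distX k
end

section
/- Define $Y = \{0\} \cup \{(a, 1/n) : a \in \{0,1\}^{\mathbb{N}}, n \ge 1\}$ where $(a, 1/n) \to 0$ as $n \to \infty$ for every $a$. Define continuous maps $g_n$ on $Y$ by $g_n((a,1/i)) = (\sigma(a), 1/(i+1))$ if $i < n$ and $g_n(y) = y$ otherwise, where $\sigma$ is the left shift on $\{0,1\}^{\mathbb{N}}$. Then $h_{top}(Y, \{g_n\}) = 0$. -/
open Filter MeasureTheory

/-!
Every orbit is pushed towards `0`: after `j` steps each point of `Y` lies within `1/j` of `0`, so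
two orbits can be `ε`-apart only during the first `≈ 2/ε` steps. As `Y` is totally bounded, the
number of `(n, ε)`-separated points is then bounded independently of `n`, and
`log (sepNum n ε) / n → 0`.
-/

open Set Metric Topology

section General

variable {X : Type*}

theorem IsSeparatedSet.of_dist_le_of_ge {d : X → X → ℝ} {f : ℕ → X → X} {n J : ℕ} {ε : ℝ}
    {E : Set X} (hE : IsSeparatedSet d f n ε E)
    (hJ : ∀ j ≥ J, ∀ x y, d (compSeq f j x) (compSeq f j y) ≤ ε) :
    IsSeparatedSet d f J ε E := by
  intro x hx y hy hxy
  obtain ⟨j, -, hj⟩ := hE x hx y hy hxy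
  refine ⟨j, ?_, hj⟩
  by_contra! hJj
  exact (hJ j hJj x y).not_gt hj

/-- A separated set injects into the itineraries through a finite `ε/2`-net, of length `J`. -/
theorem IsSeparatedSet.card_le_of_totallyBounded {Z : Type*} [PseudoMetricSpace Z] {ι : X → Z}
    (hι : TotallyBounded (range ι)) (f : ℕ → X → X) {ε : ℝ} (hε : 0 < ε) (J : ℕ) :
    ∃ C : ℕ, ∀ E : Finset X, IsSeparatedSet (fun x y => dist (ι x) (ι y)) f J ε E →
      E.card ≤ C := by
  obtain ⟨t, ht, hcover⟩ := totallyBounded_iff.mp hι (ε / 2) (half_pos hε)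
  have hnet : ∀ x, ∃ z ∈ t, dist (ι x) z < ε / 2 := fun x => by
    simpa only [mem_iUnion₂, mem_ball, exists_prop] using hcover (mem_range_self x)
  choose center hcenter_mem hcenter using hnet
  let itinerary : X → Fin J → Z := fun x i => center (compSeq f i x)
  refine ⟨ht.toFinset.card ^ J, fun E hE => ?_⟩
  rw [← Fintype.card_piFinset_const]
  refine Finset.card_le_card_of_injOn itinerary (fun x _ => ?_) (fun x hx y hy hxy => ?_)
  · simp only [Finset.mem_coe, Fintype.mem_piFinset, Finite.mem_toFinset]
    exact fun i => hcenter_mem _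
  · by_contra hne
    obtain ⟨j, hjJ, hj⟩ := hE x hx y hy hne
    have hc : center (compSeq f j x) = center (compSeq f j y) := congrFun hxy ⟨j, hjJ⟩
    have hxc := hcenter (compSeq f j x)
    have hyc := hcenter (compSeq f j y)
    rw [hc] at hxc
    linarith [dist_triangle_right (ι (compSeq f j x)) (ι (compSeq f j y)) (center (compSeq f j y))]

theorem sepNum_le_of_forall_card_le {d : X → X → ℝ} {f : ℕ → X → X} {n : ℕ} {ε : ℝ} {C : ℕ}
    (hC : ∀ E : Finset X, IsSeparatedSet d f n ε E → E.card ≤ C) : sepNum d f n ε ≤ C :=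
  csSup_le ⟨0, ∅, by simp [IsSeparatedSet], Finset.card_empty⟩
    (by rintro _ ⟨E, hE, rfl⟩; exact hC E hE)

theorem nadsEntropy_eq_zero_of_sepNum_bounded {d : X → X → ℝ} {f : ℕ → X → X}
    (hbdd : ∀ ε > 0, ∃ C : ℕ, ∀ n, sepNum d f n ε ≤ C) : nadsEntropy d f = 0 := by
  have hlimsup : ∀ ε > 0,
      atTop.limsup (fun n : ℕ => ((Real.log (sepNum d f n ε) / n : ℝ) : EReal)) = 0 := by
    intro ε hε
    obtain ⟨C, hC⟩ := hbdd ε hε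
    have hlim : Tendsto (fun n : ℕ => Real.log (sepNum d f n ε) / n) atTop (𝓝 0) := by
      refine squeeze_zero (fun n => by positivity) (fun n => ?_)
        (tendsto_const_div_atTop_nhds_zero_nat (Real.log C))
      have hlog : Real.log (sepNum d f n ε) ≤ Real.log C := by
        rcases (sepNum d f n ε).eq_zero_or_pos with h0 | hpos
        · rw [h0, Nat.cast_zero, Real.log_zero]
          exact Real.log_natCast_nonneg C
        · exact Real.log_le_log (by exact_mod_cast hpos) (by exact_mod_cast hC n)
      exact div_le_div_of_nonneg_right hlog n.cast_nonneg
    exact (EReal.tendsto_coe.mpr hlim).limsup_eq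
  rw [nadsEntropy]
  exact le_antisymm (iSup₂_le fun ε hε => (hlimsup ε hε).le)
    ((hlimsup 1 one_pos).ge.trans (le_iSup₂_of_le 1 one_pos le_rfl))

theorem nadsEntropy_eq_zero_of_totallyBounded {Z : Type*} [PseudoMetricSpace Z] {ι : X → Z}
    (hι : TotallyBounded (range ι)) (f : ℕ → X → X)
    (hcollapse : ∀ ε > 0, ∃ J, ∀ j ≥ J, ∀ x y,
      dist (ι (compSeq f j x)) (ι (compSeq f j y)) ≤ ε) :
    nadsEntropy (fun x y => dist (ι x) (ι y)) f = 0 := by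
  refine nadsEntropy_eq_zero_of_sepNum_bounded fun ε hε => ?_
  obtain ⟨J, hJ⟩ := hcollapse ε hε
  obtain ⟨C, hC⟩ := IsSeparatedSet.card_le_of_totallyBounded hι f hε J
  exact ⟨C, fun n => sepNum_le_of_forall_card_le fun E hE => hC E (hE.of_dist_le_of_ge hJ)⟩

end General

theorem cantorEmb_digit_nonneg (a : ℕ → Bool) (i : ℕ) :
    0 ≤ (if a i then (2 : ℝ) else 0) / 3 ^ (i + 1) := by
  split_ifs <;> positivity

theorem cantorEmb_digit_le (a : ℕ → Bool) (i : ℕ) :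
    (if a i then (2 : ℝ) else 0) / 3 ^ (i + 1) ≤ 2 / 3 ^ (i + 1) := by
  gcongr
  split_ifs <;> norm_num

theorem hasSum_two_div_three_pow_succ : HasSum (fun i : ℕ => (2 : ℝ) / 3 ^ (i + 1)) 1 := by
  have h := (hasSum_geometric_of_lt_one (r := (1 / 3 : ℝ)) (by norm_num) (by norm_num)).mul_left
    (2 / 3)
  rw [show (2 / 3 * (1 - 1 / 3)⁻¹ : ℝ) = 1 by norm_num] at h
  refine h.congr_fun fun i => ?_
  rw [pow_succ, one_div_pow]
  field_simp

theorem cantorEmb_nonneg (a : ℕ → Bool) : 0 ≤ cantorEmb a :=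
  tsum_nonneg (cantorEmb_digit_nonneg a)

theorem cantorEmb_le_one (a : ℕ → Bool) : cantorEmb a ≤ 1 :=
  hasSum_le (cantorEmb_digit_le a)
    (Summable.of_nonneg_of_le (cantorEmb_digit_nonneg a) (cantorEmb_digit_le a)
      hasSum_two_div_three_pow_succ.summable).hasSum
    hasSum_two_div_three_pow_succ

theorem dist_iotaY_inr_zero_le (a : ℕ → Bool) (m : ℕ) :
    dist (iotaY (Sum.inr (a, m))) 0 ≤ 1 / (m + 1) := by
  have hm : (0 : ℝ) < m + 1 := by positivity
  rw [dist_zero_right, iotaY, Prod.norm_def, Real.norm_of_nonneg (by positivity),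
    Real.norm_of_nonneg (div_nonneg (cantorEmb_nonneg a) hm.le)]
  exact max_le le_rfl (div_le_div_of_nonneg_right (cantorEmb_le_one a) hm.le)

theorem range_iotaY_subset_closedBall : range iotaY ⊆ closedBall 0 1 := by
  rintro _ ⟨_ | ⟨a, m⟩, rfl⟩
  · simp [iotaY]
  · refine mem_closedBall.mpr ((dist_iotaY_inr_zero_le a m).trans ?_)
    rw [div_le_one (by positivity)]
    linarith [m.cast_nonneg (α := ℝ)]

theorem compSeq_gY_inl (j : ℕ) (u : Unit) : compSeq gY j (Sum.inl u) = Sum.inl u := by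
  induction j with
  | zero => rfl
  | succ j ih =>
    change gY j (compSeq gY j (Sum.inl u)) = _
    rw [ih]
    rfl

theorem compSeq_gY_inr (j : ℕ) (a : ℕ → Bool) (m : ℕ) :
    ∃ b : ℕ → Bool, compSeq gY j (Sum.inr (a, m)) = Sum.inr (b, max m (j - 1)) := by
  induction j with
  | zero => exact ⟨a, by rw [Nat.zero_sub, Nat.max_zero]; rfl⟩
  | succ j ih =>
    obtain ⟨b, hb⟩ := ih
    change ∃ b', gY j (compSeq gY j (Sum.inr (a, m))) = _
    by_cases hlt : max m (j - 1) < j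
    · refine ⟨fun i => b (i + 1), ?_⟩
      simp only [hb, gY, hlt, ↓reduceIte]
      rw [show max m (j + 1 - 1) = max m (j - 1) + 1 by omega]
    · refine ⟨b, ?_⟩
      simp only [hb, gY, hlt, ↓reduceIte]
      rw [show max m (j + 1 - 1) = max m (j - 1) by omega]

theorem dist_iotaY_compSeq_gY_zero_le (y : YSpace) {j : ℕ} (hj : 1 ≤ j) :
    dist (iotaY (compSeq gY j y)) 0 ≤ 1 / j := by
  rcases y with u | ⟨a, m⟩
  · rw [compSeq_gY_inl]
    simp [iotaY]
  · obtain ⟨b, hb⟩ := compSeq_gY_inr j a m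
    rw [hb]
    refine (dist_iotaY_inr_zero_le b _).trans (one_div_le_one_div_of_le (by positivity) ?_)
    exact_mod_cast (show j ≤ max m (j - 1) + 1 by omega)

theorem dist_iotaY_compSeq_gY_le_of_ge {ε : ℝ} (hε : 0 < ε) :
    ∃ J, ∀ j ≥ J, ∀ x y, dist (iotaY (compSeq gY j x)) (iotaY (compSeq gY j y)) ≤ ε := by
  obtain ⟨N, hN⟩ := exists_nat_one_div_lt (half_pos hε)
  refine ⟨N + 1, fun j hj x y => ?_⟩
  have hj' : 1 / (j : ℝ) ≤ 1 / (N + 1) :=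
    one_div_le_one_div_of_le (by positivity) (by exact_mod_cast hj)
  linarith [dist_triangle_right (iotaY (compSeq gY j x)) (iotaY (compSeq gY j y)) 0,
    dist_iotaY_compSeq_gY_zero_le x (le_of_add_le_right hj),
    dist_iotaY_compSeq_gY_zero_le y (le_of_add_le_right hj)]

theorem entropy_Y_eq_zero : nadsEntropy distY gY = 0 :=
  nadsEntropy_eq_zero_of_totallyBounded
    ((isCompact_closedBall 0 1).totallyBounded.subset range_iotaY_subset_closedBall) gY
    fun _ => dist_iotaY_compSeq_gY_le_of_ge
end
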